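/- Let Phi be a root system with simple system Delta and I ⊆ Delta, and let delta_P be the sum of positive roots not in the span of I. For every beta in Phi^+ \ span(I), one has <delta_P, beta^vee> > 0. -/

import Mathlib

noncomputable section
open scoped RealInnerProductSpace Classical
open Finset

/-- A (crystallographic) root system in a real inner product space `V`, together with a choice of
simple roots: `Φ` is the finite set of roots, `Δ ⊆ Φ` a system of simple roots. Roots are nonzero,
`Φ` is stable under the reflections it defines, pairings `⟨β,α∨⟩ = 2⟪β,α⟫/⟪α,α⟫` are integers,
the simple roots are linearly independent and span, and every root is a nonnegative or nonpositive
combination of simple roots. -/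
structure RootSystemData (V : Type*) [NormedAddCommGroup V] [InnerProductSpace ℝ V] where
  Φ : Finset V
  Δ : Finset V
  zero_not_mem : (0 : V) ∉ Φ
  simple_subset : Δ ⊆ Φ
  simple_indep : LinearIndependent ℝ (fun a : (Δ : Set V) => (a : V))
  span_eq : Submodule.span ℝ (Φ : Set V) = ⊤
  reflect_mem : ∀ α ∈ Φ, ∀ β ∈ Φ, β - (2 * ⟪β, α⟫ / ⟪α, α⟫) • α ∈ Φ
  crystal : ∀ α ∈ Φ, ∀ β ∈ Φ, ∃ n : ℤ, (n : ℝ) = 2 * ⟪β, α⟫ / ⟪α, α⟫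
  decomp : ∀ α ∈ Φ, (∃ c : V → ℝ, (∀ v, 0 ≤ c v) ∧ α = ∑ a ∈ Δ, c a • a) ∨
    (∃ c : V → ℝ, (∀ v, 0 ≤ c v) ∧ α = -∑ a ∈ Δ, c a • a)

variable {V : Type*} [NormedAddCommGroup V] [InnerProductSpace ℝ V]

/-- The pairing `⟨x, α∨⟩ = 2⟪x,α⟫/⟪α,α⟫` with the coroot of `α`. -/
def pr (x α : V) : ℝ := 2 * ⟪x, α⟫ / ⟪α, α⟫

/-- The positive roots: roots which are nonnegative combinations of the simple roots. -/
def RootSystemData.pos (R : RootSystemData V) : Finset V :=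
  R.Φ.filter fun α => ∃ c : V → ℝ, (∀ v, 0 ≤ c v) ∧ α = ∑ a ∈ R.Δ, c a • a

/-- `δ⁺`, the half-sum of the positive roots. -/
def RootSystemData.deltaPlus (R : RootSystemData V) : V := (2 : ℝ)⁻¹ • ∑ α ∈ R.pos, α

/-- `δ_P`, the sum of the positive roots not lying in the span of `I`. -/
def RootSystemData.deltaP (R : RootSystemData V) (I : Finset V) : V :=
  ∑ β ∈ R.pos.filter (fun b => b ∉ Submodule.span ℝ (I : Set V)), β

/-- The Weyl group: the subgroup of the orthogonal group of `V` generated by the reflections in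
the hyperplanes orthogonal to the roots. -/
def RootSystemData.weyl [FiniteDimensional ℝ V] (R : RootSystemData V) :
    Subgroup (V ≃ₗᵢ[ℝ] V) :=
  Subgroup.closure { w | ∃ α ∈ R.Φ, w = Submodule.reflection (ℝ ∙ α)ᗮ }


/-!
Write `s_a x = x - ⟨x, a∨⟩ a`. For `a ∈ I` the reflection `s_a` permutes the positive roots outside
`span I`, so `⟪δ_P, a⟫ = 0`. For a simple root `a ∉ I`, the sum of all positive roots pairs
positively with `a` (`s_a` permutes the positive roots that are not multiples of `a`), while a
positive root in `span I` is a nonnegative combination of simple roots other than `a`, all of which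
pair nonpositively with `a`; hence `⟪δ_P, a⟫ > 0`. A positive root outside `span I` has a positive
coefficient at some simple root outside `I`, so it pairs positively with `δ_P`.
-/

open Submodule

def reflect (a x : V) : V := x - pr x a • a

lemma pr_mul_inner_self (x a : V) : pr x a * ⟪a, a⟫ = 2 * ⟪x, a⟫ := by
  rcases eq_or_ne a 0 with rfl | ha
  · simp [pr]
  · have : ⟪a, a⟫ ≠ 0 := (real_inner_self_pos.mpr ha).ne'
    rw [pr]
    field_simp

lemma inner_reflect_self (a x : V) : ⟪reflect a x, a⟫ = -⟪x, a⟫ := by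
  rw [reflect, inner_sub_left, real_inner_smul_left, pr_mul_inner_self]
  ring

lemma pr_reflect_self (a x : V) : pr (reflect a x) a = -pr x a := by
  rw [pr, pr, inner_reflect_self]
  ring

lemma reflect_reflect (a x : V) : reflect a (reflect a x) = x := by
  rw [reflect, pr_reflect_self, reflect, neg_smul, sub_neg_eq_add, sub_add_cancel]

lemma reflect_self (a : V) : reflect a a = -a := by
  rcases eq_or_ne a 0 with rfl | ha
  · simp [reflect]
  · have : ⟪a, a⟫ ≠ 0 := (real_inner_self_pos.mpr ha).ne'
    rw [reflect, pr, mul_div_assoc, div_self this, mul_one, two_smul, sub_add_cancel_left]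

lemma sum_inner_eq_zero_of_reflect_mem {S : Finset V} {a : V}
    (hS : ∀ x ∈ S, reflect a x ∈ S) : ∑ x ∈ S, ⟪x, a⟫ = 0 := by
  have h : ∑ x ∈ S, ⟪reflect a x, a⟫ = ∑ x ∈ S, ⟪x, a⟫ :=
    sum_nbij' (reflect a) (reflect a) hS hS (fun x _ => reflect_reflect a x)
      (fun x _ => reflect_reflect a x) (fun _ _ => rfl)
  simp only [inner_reflect_self, sum_neg_distrib] at h
  linarith

namespace RootSystemData

variable (R : RootSystemData V)

lemma coeff_eq_of_sum_smul_eq {c d : V → ℝ} (h : ∑ a ∈ R.Δ, c a • a = ∑ a ∈ R.Δ, d a • a) :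
    ∀ a ∈ R.Δ, c a = d a :=
  (linearIndepOn_finset_iffₛ (v := id)).mp R.simple_indep c d h

lemma ne_zero_of_mem {α : V} (hα : α ∈ R.Φ) : α ≠ 0 :=
  fun h => R.zero_not_mem (h ▸ hα)

lemma inner_self_pos_of_mem {α : V} (hα : α ∈ R.Φ) : 0 < ⟪α, α⟫ :=
  real_inner_self_pos.mpr (R.ne_zero_of_mem hα)

lemma reflect_mem_of_mem {a x : V} (ha : a ∈ R.Φ) (hx : x ∈ R.Φ) : reflect a x ∈ R.Φ :=
  R.reflect_mem a ha x hx

lemma nonneg_or_nonpos_of_sum_smul_mem {c : V → ℝ} (h : ∑ a ∈ R.Δ, c a • a ∈ R.Φ) :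
    (∀ a ∈ R.Δ, 0 ≤ c a) ∨ ∀ a ∈ R.Δ, c a ≤ 0 := by
  rcases R.decomp _ h with ⟨d, hd, hcd⟩ | ⟨d, hd, hcd⟩
  · exact Or.inl fun a ha => R.coeff_eq_of_sum_smul_eq hcd a ha ▸ hd a
  · have hcd' : ∑ a ∈ R.Δ, c a • a = ∑ a ∈ R.Δ, (-d a) • a := by
      simp only [neg_smul, sum_neg_distrib, hcd]
    exact Or.inr fun a ha => by linarith [R.coeff_eq_of_sum_smul_eq hcd' a ha, hd a]

lemma sum_smul_mem_pos {c : V → ℝ} (h : ∑ a ∈ R.Δ, c a • a ∈ R.Φ)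
    (hc : ∀ a ∈ R.Δ, 0 ≤ c a) : ∑ a ∈ R.Δ, c a • a ∈ R.pos :=
  mem_filter.mpr ⟨h, fun v => max (c v) 0, fun _ => le_max_right _ _,
    sum_congr rfl fun a ha => by dsimp only; rw [max_eq_left (hc a ha)]⟩

lemma simple_mem_pos {a : V} (ha : a ∈ R.Δ) : a ∈ R.pos := by
  have h : ∑ k ∈ R.Δ, (if k = a then 1 else 0 : ℝ) • k = a := by simp [ite_smul, ha]
  rw [← h]
  exact R.sum_smul_mem_pos (by rw [h]; exact R.simple_subset ha) fun k _ => by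
    split_ifs <;> norm_num

lemma neg_not_mem_pos {α : V} (hα : α ∈ R.pos) : -α ∉ R.pos := by
  intro hneg
  obtain ⟨hαΦ, c, hc, rfl⟩ := mem_filter.mp hα
  obtain ⟨-, d, hd, hcd⟩ := mem_filter.mp hneg
  have h : ∑ a ∈ R.Δ, c a • a = ∑ a ∈ R.Δ, (-d a) • a := by
    simp only [neg_smul, sum_neg_distrib, ← hcd, neg_neg]
  refine R.ne_zero_of_mem hαΦ (sum_eq_zero fun a ha => ?_)
  rw [show c a = 0 by linarith [R.coeff_eq_of_sum_smul_eq h a ha, hc a, hd a], zero_smul]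

lemma exists_pos_smul_of_reflect_not_mem_pos {a α : V} (ha : a ∈ R.Δ) (hα : α ∈ R.pos)
    (hs : reflect a α ∉ R.pos) : ∃ r : ℝ, 0 < r ∧ α = r • a := by
  obtain ⟨hαΦ, c, hc, rfl⟩ := mem_filter.mp hα
  have hrepr : reflect a (∑ k ∈ R.Δ, c k • k) =
      ∑ k ∈ R.Δ, (c k - if k = a then pr (∑ k ∈ R.Δ, c k • k) a else 0) • k := by
    simp [reflect, sub_smul, ite_smul, ha]
  have hmem := hrepr ▸ R.reflect_mem_of_mem (R.simple_subset ha) hαΦ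
  rcases R.nonneg_or_nonpos_of_sum_smul_mem hmem with hnn | hnp
  · exact absurd (hrepr ▸ R.sum_smul_mem_pos hmem hnn) hs
  have hα : ∑ k ∈ R.Δ, c k • k = c a • a := by
    refine sum_eq_single_of_mem a ha fun k hk hka => ?_
    have := hnp k hk
    rw [if_neg hka, sub_zero] at this
    rw [le_antisymm this (hc k), zero_smul]
  refine ⟨c a, (hc a).lt_of_ne fun h => R.ne_zero_of_mem hαΦ ?_, hα⟩
  rw [hα, ← h, zero_smul]

lemma inner_simple_nonpos {a b : V} (ha : a ∈ R.Δ) (hb : b ∈ R.Δ) (hab : a ≠ b) :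
    ⟪a, b⟫ ≤ 0 := by
  by_contra! hpos
  have ht : 0 < pr a b := div_pos (by linarith) (R.inner_self_pos_of_mem (R.simple_subset hb))
  have hrepr : reflect b a =
      ∑ k ∈ R.Δ, ((if k = a then 1 else 0) - if k = b then pr a b else 0) • k := by
    simp [reflect, sub_smul, ite_smul, ha, hb]
  have hmem := hrepr ▸ R.reflect_mem_of_mem (R.simple_subset hb) (R.simple_subset ha)
  rcases R.nonneg_or_nonpos_of_sum_smul_mem hmem with h | h
  · have := h b hb
    simp only [if_neg hab.symm, if_true] at this
    linarith
  · have := h a ha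
    simp only [if_neg hab, if_true] at this
    linarith

lemma sum_smul_mem_span_iff {I : Finset V} (hI : I ⊆ R.Δ) {c : V → ℝ} :
    ∑ a ∈ R.Δ, c a • a ∈ span ℝ (I : Set V) ↔ ∀ a ∈ R.Δ, a ∉ I → c a = 0 := by
  constructor
  · intro h
    obtain ⟨f, -, hf⟩ := mem_span_finset.mp h
    have hcf : ∑ a ∈ R.Δ, c a • a = ∑ a ∈ R.Δ, (if a ∈ I then f a else 0) • a := by
      rw [← hf, ← sum_subset hI (f := fun a => (if a ∈ I then f a else 0) • a)
        fun a _ haI => by simp [haI]]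
      exact sum_congr rfl fun a ha => by simp [ha]
    intro a ha haI
    simpa [haI] using R.coeff_eq_of_sum_smul_eq hcf a ha
  · intro hc
    refine sum_mem fun a ha => ?_
    by_cases haI : a ∈ I
    · exact smul_mem _ _ (subset_span haI)
    · rw [hc a ha haI, zero_smul]
      exact zero_mem _

lemma inner_nonpos_of_mem_span {I : Finset V} (hI : I ⊆ R.Δ) {γ a : V} (hγ : γ ∈ R.pos)
    (hγI : γ ∈ span ℝ (I : Set V)) (ha : a ∈ R.Δ) (haI : a ∉ I) : ⟪γ, a⟫ ≤ 0 := by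
  obtain ⟨-, c, hc, rfl⟩ := mem_filter.mp hγ
  have hcI := (R.sum_smul_mem_span_iff hI).mp hγI
  rw [sum_inner]
  refine sum_nonpos fun k hk => ?_
  rw [real_inner_smul_left]
  by_cases hkI : k ∈ I
  · exact mul_nonpos_of_nonneg_of_nonpos (hc k)
      (R.inner_simple_nonpos hk ha (ne_of_mem_of_not_mem hkI haI))
  · rw [hcI k hk hkI, zero_mul]

lemma sum_inner_simple_pos {a : V} (ha : a ∈ R.Δ) : 0 < ∑ α ∈ R.pos, ⟪α, a⟫ := by
  rw [← sum_filter_add_sum_filter_not R.pos (fun α => reflect a α ∈ R.pos)]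
  have hstable : ∑ α ∈ R.pos.filter (fun α => reflect a α ∈ R.pos), ⟪α, a⟫ = 0 :=
    sum_inner_eq_zero_of_reflect_mem fun α hα => by
      simp only [mem_filter, reflect_reflect] at hα ⊢
      exact ⟨hα.2, hα.1⟩
  rw [hstable, zero_add]
  refine sum_pos (fun α hα => ?_) ⟨a, mem_filter.mpr ⟨R.simple_mem_pos ha, ?_⟩⟩
  · rw [mem_filter] at hα
    obtain ⟨r, hr, rfl⟩ := R.exists_pos_smul_of_reflect_not_mem_pos ha hα.1 hα.2
    rw [real_inner_smul_left]
    exact mul_pos hr (R.inner_self_pos_of_mem (R.simple_subset ha))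
  · rw [reflect_self]
    exact R.neg_not_mem_pos (R.simple_mem_pos ha)

lemma inner_deltaP_of_mem {I : Finset V} (hI : I ⊆ R.Δ) {a : V} (ha : a ∈ I) :
    ⟪R.deltaP I, a⟫ = 0 := by
  have haI : a ∈ span ℝ (I : Set V) := subset_span ha
  rw [deltaP, sum_inner]
  refine sum_inner_eq_zero_of_reflect_mem fun α hα => ?_
  rw [mem_filter] at hα ⊢
  refine ⟨?_, fun h => hα.2 ?_⟩
  · by_contra hs
    obtain ⟨r, -, rfl⟩ := R.exists_pos_smul_of_reflect_not_mem_pos (hI ha) hα.1 hs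
    exact hα.2 (smul_mem _ r haI)
  · rw [← sub_add_cancel α (pr α a • a)]
    exact add_mem h (smul_mem _ _ haI)

lemma inner_deltaP_pos_of_not_mem {I : Finset V} (hI : I ⊆ R.Δ) {a : V} (ha : a ∈ R.Δ)
    (haI : a ∉ I) : 0 < ⟪R.deltaP I, a⟫ := by
  have hsplit := sum_filter_add_sum_filter_not R.pos (· ∈ span ℝ (I : Set V)) (⟪·, a⟫)
  have hspan : ∑ γ ∈ R.pos.filter (· ∈ span ℝ (I : Set V)), ⟪γ, a⟫ ≤ 0 :=
    sum_nonpos fun γ hγ =>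
      R.inner_nonpos_of_mem_span hI (mem_filter.mp hγ).1 (mem_filter.mp hγ).2 ha haI
  rw [deltaP, sum_inner]
  linarith [R.sum_inner_simple_pos ha]

lemma inner_deltaP_nonneg {I : Finset V} (hI : I ⊆ R.Δ) {a : V} (ha : a ∈ R.Δ) :
    0 ≤ ⟪R.deltaP I, a⟫ := by
  by_cases haI : a ∈ I
  · exact (R.inner_deltaP_of_mem hI haI).ge
  · exact (R.inner_deltaP_pos_of_not_mem hI ha haI).le

end RootSystemData

/-- For `I ⊆ Δ` and `δ_P` the sum of the positive roots not in the span of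
`I`, one has `⟨δ_P, β∨⟩ > 0` for every positive root `β` outside the span of `I`. -/
theorem statement8 (R : RootSystemData V) (I : Finset V) (hI : I ⊆ R.Δ) :
    ∀ β ∈ R.pos, β ∉ Submodule.span ℝ (I : Set V) → 0 < pr (R.deltaP I) β := by
  intro β hβ hβI
  obtain ⟨hβΦ, c, hc, rfl⟩ := mem_filter.mp hβ
  obtain ⟨a, ha, haI, hca⟩ : ∃ a ∈ R.Δ, a ∉ I ∧ c a ≠ 0 := by
    by_contra! h
    exact hβI ((R.sum_smul_mem_span_iff hI).mpr h)
  have hinner : 0 < ⟪R.deltaP I, ∑ k ∈ R.Δ, c k • k⟫ := by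
    simp only [inner_sum, real_inner_smul_right]
    exact sum_pos' (fun k hk => mul_nonneg (hc k) (R.inner_deltaP_nonneg hI hk))
      ⟨a, ha, mul_pos ((hc a).lt_of_ne' hca) (R.inner_deltaP_pos_of_not_mem hI ha haI)⟩
  exact div_pos (by linarith) (R.inner_self_pos_of_mem hβΦ)
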